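/- For integers n, m ≥ 3, the F-index of the edge R-join of the cycle C_n and the cycle C_m is F(C_n ∨̱_R C_m) = n(m + 2)³ + mn³ + 6mn² + 12mn + 8m + 64n. -/

import Mathlib

/-- The subdivision graph `S(G)`: a new vertex is inserted into each edge of `G`
(each edge is replaced by a path of length 2). The inserted vertices form the
right summand `↥G.edgeSet`. -/
def Sgraph {V : Type*} (G : SimpleGraph V) : SimpleGraph (V ⊕ ↥G.edgeSet) where
  Adj x y :=
    match x, y with
    | Sum.inl v, Sum.inr e => v ∈ (e : Sym2 V)
    | Sum.inr e, Sum.inl v => v ∈ (e : Sym2 V)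
    | _, _ => False
  symm := by constructor; rintro (v | e) (w | f) h <;> exact h
  loopless := by constructor; rintro (v | e) h <;> exact h

/-- The graph `R(G)`: obtained from `G` by inserting a new vertex into each edge of `G`
and joining each new vertex to the end vertices of its corresponding edge. -/
def Rgraph {V : Type*} (G : SimpleGraph V) : SimpleGraph (V ⊕ ↥G.edgeSet) where
  Adj x y :=
    match x, y with
    | Sum.inl v, Sum.inl w => G.Adj v w
    | Sum.inl v, Sum.inr e => v ∈ (e : Sym2 V)
    | Sum.inr e, Sum.inl v => v ∈ (e : Sym2 V)
    | Sum.inr _, Sum.inr _ => False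
  symm := by
    constructor
    rintro (v | e) (w | f) h
    · exact G.adj_symm h
    · exact h
    · exact h
    · exact h
  loopless := by
    constructor
    rintro (v | e) h
    · exact G.irrefl h
    · exact h

/-- The graph `Q(G)`: obtained from `G` by inserting a new vertex into each edge of `G`,
then joining by edges those pairs of new vertices lying on adjacent edges of `G`. -/
def Qgraph {V : Type*} (G : SimpleGraph V) : SimpleGraph (V ⊕ ↥G.edgeSet) where
  Adj x y :=
    match x, y with
    | Sum.inl _, Sum.inl _ => False
    | Sum.inl v, Sum.inr e => v ∈ (e : Sym2 V)
    | Sum.inr e, Sum.inl v => v ∈ (e : Sym2 V)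
    | Sum.inr e, Sum.inr f => e ≠ f ∧ ∃ v, v ∈ (e : Sym2 V) ∧ v ∈ (f : Sym2 V)
  symm := by
    constructor
    rintro (v | e) (w | f) h
    · exact h
    · exact h
    · exact h
    · exact ⟨h.1.symm, by obtain ⟨v, h1, h2⟩ := h.2; exact ⟨v, h2, h1⟩⟩
  loopless := by
    constructor
    rintro (v | e) h
    · exact h
    · exact h.1 rfl

/-- The total graph `T(G)`: obtained from `G` by inserting a new vertex into each edge,
joining each new vertex to the end vertices of its corresponding edge, and joining by
edges those pairs of new vertices lying on adjacent edges of `G`. -/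
def Tgraph {V : Type*} (G : SimpleGraph V) : SimpleGraph (V ⊕ ↥G.edgeSet) where
  Adj x y :=
    match x, y with
    | Sum.inl v, Sum.inl w => G.Adj v w
    | Sum.inl v, Sum.inr e => v ∈ (e : Sym2 V)
    | Sum.inr e, Sum.inl v => v ∈ (e : Sym2 V)
    | Sum.inr e, Sum.inr f => e ≠ f ∧ ∃ v, v ∈ (e : Sym2 V) ∧ v ∈ (f : Sym2 V)
  symm := by
    constructor
    rintro (v | e) (w | f) h
    · exact G.adj_symm h
    · exact h
    · exact h
    · exact ⟨h.1.symm, by obtain ⟨v, h1, h2⟩ := h.2; exact ⟨v, h2, h1⟩⟩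
  loopless := by
    constructor
    rintro (v | e) h
    · exact G.irrefl h
    · exact h.1 rfl

/-- The disjoint union of `H` and `K` together with all edges joining a vertex `a` of `H`
with `P a` to every vertex of `K`. -/
def joinOn {A B : Type*} (H : SimpleGraph A) (K : SimpleGraph B) (P : A → Prop) :
    SimpleGraph (A ⊕ B) where
  Adj x y :=
    match x, y with
    | Sum.inl a, Sum.inl a' => H.Adj a a'
    | Sum.inr b, Sum.inr b' => K.Adj b b'
    | Sum.inl a, Sum.inr _ => P a
    | Sum.inr _, Sum.inl a => P a
  symm := by
    constructor
    rintro (a | b) (a' | b') h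
    · exact H.adj_symm h
    · exact h
    · exact h
    · exact K.adj_symm h
  loopless := by
    constructor
    rintro (a | b) h
    · exact H.irrefl h
    · exact K.irrefl h

/-- The vertex S-join `G₁ ∨̇_S G₂`: obtained from `S(G₁)` and `G₂` by joining each vertex
of `V(G₁)` to every vertex of `G₂`. -/
def vertexSJoin {V₁ V₂ : Type*} (G₁ : SimpleGraph V₁) (G₂ : SimpleGraph V₂) :
    SimpleGraph ((V₁ ⊕ ↥G₁.edgeSet) ⊕ V₂) :=
  joinOn (Sgraph G₁) G₂ (fun x => x.isLeft)

/-- The edge S-join `G₁ ∨̱_S G₂`: obtained from `S(G₁)` and `G₂` by joining each inserted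
vertex (each vertex of `I(G₁)`) to every vertex of `G₂`. -/
def edgeSJoin {V₁ V₂ : Type*} (G₁ : SimpleGraph V₁) (G₂ : SimpleGraph V₂) :
    SimpleGraph ((V₁ ⊕ ↥G₁.edgeSet) ⊕ V₂) :=
  joinOn (Sgraph G₁) G₂ (fun x => x.isRight)

/-- The vertex R-join `G₁ ∨̇_R G₂`. -/
def vertexRJoin {V₁ V₂ : Type*} (G₁ : SimpleGraph V₁) (G₂ : SimpleGraph V₂) :
    SimpleGraph ((V₁ ⊕ ↥G₁.edgeSet) ⊕ V₂) :=
  joinOn (Rgraph G₁) G₂ (fun x => x.isLeft)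

/-- The edge R-join `G₁ ∨̱_R G₂`. -/
def edgeRJoin {V₁ V₂ : Type*} (G₁ : SimpleGraph V₁) (G₂ : SimpleGraph V₂) :
    SimpleGraph ((V₁ ⊕ ↥G₁.edgeSet) ⊕ V₂) :=
  joinOn (Rgraph G₁) G₂ (fun x => x.isRight)

/-- The vertex Q-join `G₁ ∨̇_Q G₂`. -/
def vertexQJoin {V₁ V₂ : Type*} (G₁ : SimpleGraph V₁) (G₂ : SimpleGraph V₂) :
    SimpleGraph ((V₁ ⊕ ↥G₁.edgeSet) ⊕ V₂) :=
  joinOn (Qgraph G₁) G₂ (fun x => x.isLeft)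

/-- The edge Q-join `G₁ ∨̱_Q G₂`. -/
def edgeQJoin {V₁ V₂ : Type*} (G₁ : SimpleGraph V₁) (G₂ : SimpleGraph V₂) :
    SimpleGraph ((V₁ ⊕ ↥G₁.edgeSet) ⊕ V₂) :=
  joinOn (Qgraph G₁) G₂ (fun x => x.isRight)

/-- The vertex T-join `G₁ ∨̇_T G₂`. -/
def vertexTJoin {V₁ V₂ : Type*} (G₁ : SimpleGraph V₁) (G₂ : SimpleGraph V₂) :
    SimpleGraph ((V₁ ⊕ ↥G₁.edgeSet) ⊕ V₂) :=
  joinOn (Tgraph G₁) G₂ (fun x => x.isLeft)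

/-- The edge T-join `G₁ ∨̱_T G₂`. -/
def edgeTJoin {V₁ V₂ : Type*} (G₁ : SimpleGraph V₁) (G₂ : SimpleGraph V₂) :
    SimpleGraph ((V₁ ⊕ ↥G₁.edgeSet) ⊕ V₂) :=
  joinOn (Tgraph G₁) G₂ (fun x => x.isRight)

/-- Degree of a vertex in a graph on a finite vertex type. -/
noncomputable def gdeg {V : Type*} [Finite V] (G : SimpleGraph V) (v : V) : ℕ :=
  haveI : Fintype ↥(G.neighborSet v) := Fintype.ofFinite _
  G.degree v

/-- The forgotten topological index (F-index): `F(G) = ∑_{v ∈ V(G)} d_G(v)³`. -/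
noncomputable def Findex {V : Type*} [Finite V] (G : SimpleGraph V) : ℕ :=
  haveI := Fintype.ofFinite V
  ∑ v : V, gdeg G v ^ 3

/-- The first Zagreb index: `M₁(G) = ∑_{v ∈ V(G)} d_G(v)²`. -/
noncomputable def M1 {V : Type*} [Finite V] (G : SimpleGraph V) : ℕ :=
  haveI := Fintype.ofFinite V
  ∑ v : V, gdeg G v ^ 2

/-- `M₄(G) = ∑_{v ∈ V(G)} d_G(v)⁴`. -/
noncomputable def M4 {V : Type*} [Finite V] (G : SimpleGraph V) : ℕ :=
  haveI := Fintype.ofFinite V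
  ∑ v : V, gdeg G v ^ 4

/-- The hyper Zagreb index: `HM(G) = ∑_{uv ∈ E(G)} (d_G(u) + d_G(v))²`. -/
noncomputable def HM {V : Type*} [Finite V] (G : SimpleGraph V) : ℕ :=
  haveI : Fintype ↥G.edgeSet := Fintype.ofFinite _
  ∑ e : ↥G.edgeSet,
    Sym2.lift ⟨fun u v => (gdeg G u + gdeg G v) ^ 2,
      fun u v => by dsimp only; rw [add_comm]⟩ (e : Sym2 V)

/-- The redefined Zagreb index:
`ReZM(G) = ∑_{uv ∈ E(G)} d_G(u) d_G(v) (d_G(u) + d_G(v))`. -/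
noncomputable def ReZM {V : Type*} [Finite V] (G : SimpleGraph V) : ℕ :=
  haveI : Fintype ↥G.edgeSet := Fintype.ofFinite _
  ∑ e : ↥G.edgeSet,
    Sym2.lift ⟨fun u v => gdeg G u * gdeg G v * (gdeg G u + gdeg G v),
      fun u v => by dsimp only; ring⟩ (e : Sym2 V)

/-- The number of edges of `G`. -/
noncomputable def numEdges {V : Type*} (G : SimpleGraph V) : ℕ :=
  Nat.card ↥G.edgeSet

/-! In `G₁ ∨̱_R G₂` a vertex of `G₁` of degree `d` sees its `d` neighbours and the `d` inserted
vertices on its edges, so has degree `2d`; an inserted vertex sees the two ends of its edge and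
all of `V₂`; a vertex of `G₂` gains every inserted vertex. Summing cubes,
`F(G₁ ∨̱_R G₂) = 8 F(G₁) + |E₁| (|V₂| + 2)³ + ∑_{b ∈ V₂} (|E₁| + d(b))³`, and for cycles every
degree is `2` and `|E(C_n)| = n`. -/

open SimpleGraph Finset

lemma Set.ncard_image_inl_union_image_inr {α β : Type*} [Finite α] [Finite β]
    (s : Set α) (t : Set β) :
    (Sum.inl '' s ∪ Sum.inr '' t : Set (α ⊕ β)).ncard = s.ncard + t.ncard := by
  rw [Set.ncard_union_eq Set.disjoint_image_inl_image_inr (Set.toFinite _) (Set.toFinite _),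
    Set.ncard_image_of_injective _ Sum.inl_injective,
    Set.ncard_image_of_injective _ Sum.inr_injective]

lemma Sym2.ncard_setOf_mem_of_not_isDiag {α : Type*} {z : Sym2 α} (hz : ¬z.IsDiag) :
    {a | a ∈ z}.ncard = 2 := by
  classical
  have : {a | a ∈ z} = (z.toFinset : Set α) := by ext; simp
  rw [this, Set.ncard_coe_finset, Sym2.card_toFinset_of_not_isDiag z hz]

section Degree

variable {V : Type*} (G : SimpleGraph V)

lemma gdeg_eq_ncard [Finite V] (v : V) : gdeg G v = (G.neighborSet v).ncard := by
  let : Fintype (G.neighborSet v) := Fintype.ofFinite _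
  rw [gdeg, ← card_neighborSet_eq_degree, ← Nat.card_eq_fintype_card, Nat.card_coe_set_eq]

lemma gdeg_eq_degree [Fintype V] [DecidableRel G.Adj] (v : V) : gdeg G v = G.degree v := by
  rw [gdeg_eq_ncard, Set.ncard_eq_toFinset_card', Set.toFinset_card,
    card_neighborSet_eq_degree]

lemma ncard_setOf_mem_edge_eq_gdeg [Finite V] (v : V) :
    {e : G.edgeSet | v ∈ (e : Sym2 V)}.ncard = gdeg G v := by
  classical
  have himage : Subtype.val '' {e : G.edgeSet | v ∈ (e : Sym2 V)} = G.incidenceSet v := by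
    ext e; simp [incidenceSet, and_comm]
  rw [← Set.ncard_image_of_injective _ Subtype.val_injective, himage, gdeg_eq_ncard,
    ← Nat.card_coe_set_eq, ← Nat.card_coe_set_eq, Nat.card_congr (G.incidenceSetEquivNeighborSet v)]

lemma Findex_eq_sum [Fintype V] : Findex G = ∑ v, gdeg G v ^ 3 := by
  unfold Findex
  congr!

variable [Fintype V] [DecidableRel G.Adj] {G} {k : ℕ}

lemma SimpleGraph.IsRegularOfDegree.gdeg_eq (h : G.IsRegularOfDegree k) (v : V) : gdeg G v = k := by
  rw [gdeg_eq_degree, h.degree_eq]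

lemma SimpleGraph.IsRegularOfDegree.Findex_eq (h : G.IsRegularOfDegree k) :
    Findex G = Fintype.card V * k ^ 3 := by
  simp [Findex_eq_sum, h.gdeg_eq]

lemma SimpleGraph.IsRegularOfDegree.two_mul_card_edgeFinset (h : G.IsRegularOfDegree k) :
    2 * #G.edgeFinset = Fintype.card V * k := by
  simp [← sum_degrees_eq_twice_card_edges, h.degree_eq]

end Degree

section joinOn

variable {A B : Type*} (H : SimpleGraph A) (K : SimpleGraph B) (P : A → Prop)

lemma joinOn_neighborSet_inl (a : A) :
    (joinOn H K P).neighborSet (.inl a) = .inl '' H.neighborSet a ∪ .inr '' {_b | P a} := by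
  ext (a' | b) <;> simp [joinOn, neighborSet]

lemma joinOn_neighborSet_inr (b : B) :
    (joinOn H K P).neighborSet (.inr b) = .inl '' {a | P a} ∪ .inr '' K.neighborSet b := by
  ext (a | b') <;> simp [joinOn, neighborSet]

variable [Finite A] [Finite B]

lemma gdeg_joinOn_inl (a : A) [Decidable (P a)] :
    gdeg (joinOn H K P) (.inl a) = gdeg H a + if P a then Nat.card B else 0 := by
  rw [gdeg_eq_ncard, joinOn_neighborSet_inl, Set.ncard_image_inl_union_image_inr, gdeg_eq_ncard]
  split_ifs with h <;> simp [h]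

lemma gdeg_joinOn_inr (b : B) :
    gdeg (joinOn H K P) (.inr b) = {a | P a}.ncard + gdeg K b := by
  rw [gdeg_eq_ncard, joinOn_neighborSet_inr, Set.ncard_image_inl_union_image_inr, gdeg_eq_ncard]

end joinOn

section Rgraph

variable {V : Type*} (G : SimpleGraph V)

lemma Rgraph_neighborSet_inl (v : V) :
    (Rgraph G).neighborSet (.inl v) = .inl '' G.neighborSet v ∪
      .inr '' {e : G.edgeSet | v ∈ (e : Sym2 V)} := by
  ext (w | e) <;> simp [Rgraph, neighborSet]

lemma Rgraph_neighborSet_inr (e : G.edgeSet) :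
    (Rgraph G).neighborSet (.inr e) = .inl '' {v | v ∈ (e : Sym2 V)} := by
  ext (w | f) <;> simp [Rgraph, neighborSet]

variable [Finite V]

lemma gdeg_Rgraph_inl (v : V) : gdeg (Rgraph G) (.inl v) = 2 * gdeg G v := by
  rw [gdeg_eq_ncard, Rgraph_neighborSet_inl, Set.ncard_image_inl_union_image_inr,
    ncard_setOf_mem_edge_eq_gdeg, ← gdeg_eq_ncard, two_mul]

lemma gdeg_Rgraph_inr (e : G.edgeSet) : gdeg (Rgraph G) (.inr e) = 2 := by
  rw [gdeg_eq_ncard, Rgraph_neighborSet_inr, Set.ncard_image_of_injective _ Sum.inl_injective,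
    Sym2.ncard_setOf_mem_of_not_isDiag (G.not_isDiag_of_mem_edgeSet e.2)]

end Rgraph

section edgeRJoin

variable {V₁ V₂ : Type*} [Finite V₁] [Finite V₂] (G₁ : SimpleGraph V₁) (G₂ : SimpleGraph V₂)

lemma gdeg_edgeRJoin_inl_inl (v : V₁) :
    gdeg (edgeRJoin G₁ G₂) (.inl (.inl v)) = 2 * gdeg G₁ v := by
  simp [edgeRJoin, gdeg_joinOn_inl, gdeg_Rgraph_inl]

lemma gdeg_edgeRJoin_inl_inr (e : G₁.edgeSet) :
    gdeg (edgeRJoin G₁ G₂) (.inl (.inr e)) = 2 + Nat.card V₂ := by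
  simp [edgeRJoin, gdeg_joinOn_inl, gdeg_Rgraph_inr]

lemma gdeg_edgeRJoin_inr (b : V₂) :
    gdeg (edgeRJoin G₁ G₂) (.inr b) = Nat.card G₁.edgeSet + gdeg G₂ b := by
  rw [edgeRJoin, gdeg_joinOn_inr, ← Set.range_inr, Set.ncard_range_of_injective Sum.inr_injective]

end edgeRJoin

lemma Findex_edgeRJoin {V₁ V₂ : Type*} [Fintype V₁] [Fintype V₂]
    (G₁ : SimpleGraph V₁) (G₂ : SimpleGraph V₂) :
    Findex (edgeRJoin G₁ G₂) = 8 * Findex G₁ + Nat.card G₁.edgeSet * (2 + Nat.card V₂) ^ 3 +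
      ∑ b, (Nat.card G₁.edgeSet + gdeg G₂ b) ^ 3 := by
  let : Fintype G₁.edgeSet := Fintype.ofFinite _
  simp only [Findex_eq_sum, Fintype.sum_sum_type, gdeg_edgeRJoin_inl_inl, gdeg_edgeRJoin_inl_inr,
    gdeg_edgeRJoin_inr, mul_pow, sum_const, card_univ, smul_eq_mul, Nat.card_eq_fintype_card,
    ← mul_sum]
  norm_num

lemma cycleGraph_isRegularOfDegree_two {n : ℕ} (hn : 3 ≤ n) :
    (cycleGraph n).IsRegularOfDegree 2 := by
  obtain ⟨k, rfl⟩ := Nat.exists_eq_add_of_le' hn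
  exact fun _ => cycleGraph_degree_three_le

lemma natCard_edgeSet_cycleGraph {n : ℕ} (hn : 3 ≤ n) : Nat.card (cycleGraph n).edgeSet = n := by
  have h := (cycleGraph_isRegularOfDegree_two hn).two_mul_card_edgeFinset
  rw [Fintype.card_fin] at h
  rw [← coe_edgeFinset, Nat.card_coe_set_eq, Set.ncard_coe_finset]
  omega

theorem Findex_edgeRJoin_ex14 (n m : ℕ) (hn : 3 ≤ n) (hm : 3 ≤ m) :
    (Findex (edgeRJoin (SimpleGraph.cycleGraph n) (SimpleGraph.cycleGraph m)) : ℤ) =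
      (n : ℤ) * ((m : ℤ) + 2) ^ 3 + (m : ℤ) * (n : ℤ) ^ 3 + 6 * (m : ℤ) * (n : ℤ) ^ 2 + 12 * (m : ℤ) * (n : ℤ) + 8 * (m : ℤ) + 64 * (n : ℤ) := by
  have hCn := cycleGraph_isRegularOfDegree_two hn
  have hCm := cycleGraph_isRegularOfDegree_two hm
  rw [Findex_edgeRJoin, hCn.Findex_eq, natCard_edgeSet_cycleGraph hn]
  simp only [hCm.gdeg_eq, sum_const, card_univ, Fintype.card_fin, Nat.card_eq_fintype_card,
    smul_eq_mul]
  push_cast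
  ring
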